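/- arXiv:0812.0870 — 9 statements merged into one kernel-verified Lean document; each statement's English description precedes it below -/
import Mathlib

section
/- The simple graph G on vertex set {1,2,3,4,5,6,7} with edge set {{1,2},{1,5},{1,7},{2,3},{2,6},{3,4},{3,6},{4,5},{4,6},{4,7}} (graph number 721 in the Atlas of Graphs) has minimum rank 3 over the real numbers. -/
/-!
Vertices 1, 2, 3, 4 induce a path, so every matrix with the pattern of the graph has a lower
triangular 3 × 3 minor (rows 1, 2, 3, columns 2, 3, 4) whose diagonal entries are the nonzero
entries on the edges of that path; hence its rank is at least 3. Conversely, the Gram matrix of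
seven suitable vectors for the indefinite form x² + y² - z² on ℝ³ has exactly the pattern of the
graph and rank at most 3.
-/

/-- Edge list of graph number 721 in the Atlas of Graphs (vertices 1..7). -/
def atlas721Edges : List (ℕ × ℕ) := [(1,2),(1,5),(1,7),(2,3),(2,6),(3,4),(3,6),(4,5),(4,6),(4,7)]

open Matrix

theorem Matrix.three_le_rank_of_path {n R : Type*} [Fintype n] [CommRing R] [IsDomain R]
    (A : Matrix n n R) {a b c d : n} (hab : A a b ≠ 0) (hbc : A b c ≠ 0) (hcd : A c d ≠ 0)
    (hac : A a c = 0) (had : A a d = 0) (hbd : A b d = 0) : 3 ≤ A.rank := by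
  have hdet : (A.submatrix ![a, b, c] ![b, c, d]).det ≠ 0 := by
    rw [det_fin_three]
    simpa [hac, had, hbd] using mul_ne_zero (mul_ne_zero hab hbc) hcd
  calc 3 = (A.submatrix ![a, b, c] ![b, c, d]).rank := by
        rw [rank_of_det_ne_zero hdet, Fintype.card_fin]
    _ ≤ A.rank := rank_submatrix_le _ _ _

def Atlas721Pattern (A : Matrix (Fin 7) (Fin 7) ℝ) : Prop :=
  ∀ i j : Fin 7, i ≠ j →
    (A i j ≠ 0 ↔ ((i.val + 1, j.val + 1) ∈ atlas721Edges ∨ (j.val + 1, i.val + 1) ∈ atlas721Edges))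

theorem Atlas721Pattern.three_le_rank {A : Matrix (Fin 7) (Fin 7) ℝ} (hA : Atlas721Pattern A) :
    3 ≤ A.rank := by
  have hzero : ∀ i j : Fin 7, i ≠ j → (A i j = 0 ↔ ¬((i.val + 1, j.val + 1) ∈ atlas721Edges ∨
      (j.val + 1, i.val + 1) ∈ atlas721Edges)) :=
    fun i j hij => by rw [← hA i j hij, not_not]
  refine A.three_le_rank_of_path (a := 0) (b := 1) (c := 2) (d := 3) ?_ ?_ ?_ ?_ ?_ ?_ <;>
    simp [hzero, atlas721Edges]

noncomputable def atlas721Vectors : Matrix (Fin 7) (Fin 3) ℝ :=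
  !![-2, -2, -2; -2, -2, 2; -2, 1, -1; -2, 2, 0; 0, -2, 2; -2, 1, -1; 0, -2, 2]

noncomputable def atlas721Witness : Matrix (Fin 7) (Fin 7) ℝ :=
  atlas721Vectors * diagonal ![(1 : ℝ), 1, -1] * atlas721Vectorsᵀ

theorem atlas721Witness_eq : atlas721Witness =
    !![4, 12, 0, 0, 8, 0, 8;
       12, 4, 4, 0, 0, 4, 0;
       0, 4, 4, 6, 0, 4, 0;
       0, 0, 6, 8, -4, 6, -4;
       8, 0, 0, -4, 0, 0, 0;
       0, 4, 4, 6, 0, 4, 0;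
       8, 0, 0, -4, 0, 0, 0] := by
  ext i j
  simp only [atlas721Witness, mul_apply, transpose_apply, Fin.sum_univ_three]
  fin_cases i <;> fin_cases j <;> simp [atlas721Vectors] <;> norm_num

theorem atlas721Witness_isSymm : atlas721Witness.IsSymm := by
  simp [atlas721Witness, IsSymm, transpose_mul, Matrix.mul_assoc]

theorem rank_atlas721Witness_le : atlas721Witness.rank ≤ 3 :=
  calc atlas721Witness.rank ≤ (atlas721Vectors * diagonal ![(1 : ℝ), 1, -1]).rank :=
        rank_mul_le_left _ _
    _ ≤ 3 := (rank_le_card_width _).trans_eq (Fintype.card_fin 3)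

theorem atlas721Pattern_witness : Atlas721Pattern atlas721Witness := by
  intro i j hij
  rw [atlas721Witness_eq]
  fin_cases i <;> fin_cases j <;> simp_all [atlas721Edges]

/-- Graph number 721 in the Atlas of Graphs has minimum rank 3 over the reals:
3 is the least element of the set of ranks of real symmetric 7×7 matrices whose
off-diagonal zero/nonzero pattern matches the edges of the graph. -/
theorem atlas721_minRank_eq_three :
    IsLeast {r : ℕ | ∃ A : Matrix (Fin 7) (Fin 7) ℝ, A.IsSymm ∧
        (∀ i j : Fin 7, i ≠ j →
          (A i j ≠ 0 ↔
            ((i.val + 1, j.val + 1) ∈ atlas721Edges ∨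
             (j.val + 1, i.val + 1) ∈ atlas721Edges))) ∧
        A.rank = r} 3 := by
  refine ⟨⟨atlas721Witness, atlas721Witness_isSymm, atlas721Pattern_witness, ?_⟩, ?_⟩
  · exact le_antisymm rank_atlas721Witness_le atlas721Pattern_witness.three_le_rank
  · rintro r ⟨A, -, hA, rfl⟩
    exact Atlas721Pattern.three_le_rank hA
end

section
/- The simple graph G on vertex set {1,2,3,4,5,6,7} with edge set {{1,2},{1,3},{2,4},{2,5},{2,7},{3,4},{3,5},{3,7},{4,5},{4,6},{5,6}} (graph number 812 in the Atlas of Graphs) has minimum rank 3 over the real numbers. -/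
/-!
Vertices 1 and 7 are non-adjacent twins, as are 2 and 3, while 4 and 5 are adjacent twins.
Giving each twin class a coordinate vector in `ℤ³`, and vertex 6 the vector `e₃ - e₁`, the
realization `B D Bᵀ` with a suitable symmetric `3 × 3` matrix `D` has rank at most 3.
Conversely, in any realization rows 1, 3, 6 and columns 2, 7, 4 form a triangular submatrix
whose diagonal entries are edges and whose entries below the diagonal are non-edges, so it is
invertible and the rank is at least 3.
-/

/-- Edge list of graph number 812 in the Atlas of Graphs (vertices 1..7). -/
def atlas812Edges : List (ℕ × ℕ) := [(1,2),(1,3),(2,4),(2,5),(2,7),(3,4),(3,5),(3,7),(4,5),(4,6),(5,6)]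

namespace Matrix

variable {m n k K : Type*} [Fintype n] [Fintype k] [LinearOrder k] [Field K]

theorem card_le_rank_of_isUpperTriangular_submatrix (A : Matrix m n K) (r : k → m) (c : k → n)
    (hA : (A.submatrix r c).IsUpperTriangular) (hdiag : ∀ i, A (r i) (c i) ≠ 0) :
    Fintype.card k ≤ A.rank := by
  have hdet : (A.submatrix r c).det ≠ 0 := by
    rw [det_of_isUpperTriangular hA]
    exact Finset.prod_ne_zero_iff.mpr fun i _ => hdiag i
  calc Fintype.card k = (A.submatrix r c).rank :=
        (rank_of_isUnit _ ((isUnit_iff_isUnit_det _).mpr hdet.isUnit)).symm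
    _ ≤ A.rank := rank_submatrix_le A r c

end Matrix

def SimpleGraph.HasPattern {V R : Type*} [Zero R] (G : SimpleGraph V) (A : Matrix V V R) : Prop :=
  ∀ i j, i ≠ j → (A i j ≠ 0 ↔ G.Adj i j)

namespace SimpleGraph.HasPattern

variable {V : Type*} {G : SimpleGraph V}

theorem map {R S F : Type*} [Zero R] [Zero S] [FunLike F R S] [ZeroHomClass F R S]
    {A : Matrix V V R} (hA : G.HasPattern A) (f : F) (hf : Function.Injective f) :
    G.HasPattern (A.map f) := fun i j hij => by
  rw [Matrix.map_apply, map_ne_zero_iff f hf]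
  exact hA i j hij

theorem card_le_rank [Fintype V] {K k : Type*} [Field K] [Fintype k] [LinearOrder k]
    {A : Matrix V V K} (hA : G.HasPattern A) (r c : k → V) (hdiag : ∀ i, G.Adj (r i) (c i))
    (hbelow : ∀ i j, j < i → r i ≠ c j ∧ ¬G.Adj (r i) (c j)) :
    Fintype.card k ≤ A.rank := by
  refine A.card_le_rank_of_isUpperTriangular_submatrix r c (fun i j hji => ?_) fun i =>
    (hA _ _ (hdiag i).ne).mpr (hdiag i)
  obtain ⟨hne, hnadj⟩ := hbelow i j hji
  exact not_not.mp (mt (hA _ _ hne).mp hnadj)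

end SimpleGraph.HasPattern

def atlas812 : SimpleGraph (Fin 7) :=
  SimpleGraph.fromRel fun i j => (i.val + 1, j.val + 1) ∈ atlas812Edges

namespace atlas812

instance : DecidableRel atlas812.Adj := fun i j =>
  inferInstanceAs (Decidable (i ≠ j ∧ _))

theorem hasPattern_iff {R : Type*} [Zero R] (A : Matrix (Fin 7) (Fin 7) R) :
    atlas812.HasPattern A ↔ ∀ i j : Fin 7, i ≠ j →
      (A i j ≠ 0 ↔
        ((i.val + 1, j.val + 1) ∈ atlas812Edges ∨ (j.val + 1, i.val + 1) ∈ atlas812Edges)) :=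
  forall₂_congr fun i j => imp_congr_right fun hij => by
    simp only [atlas812, SimpleGraph.fromRel_adj, ne_eq, hij, not_false_eq_true, true_and]

theorem three_le_rank {K : Type*} [Field K] {A : Matrix (Fin 7) (Fin 7) K}
    (hA : atlas812.HasPattern A) : 3 ≤ A.rank :=
  hA.card_le_rank (k := Fin 3) ![0, 2, 5] ![1, 6, 3] (by decide) (by decide)

def classMatrix : Matrix (Fin 7) (Fin 3) ℤ :=
  !![1, 0, 0; 0, 1, 0; 0, 1, 0; 0, 0, 1; 0, 0, 1; -1, 0, 1; 1, 0, 0]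

def classGram : Matrix (Fin 3) (Fin 3) ℤ :=
  !![0, 2, 0; 2, 0, 2; 0, 2, 1]

def witness : Matrix (Fin 7) (Fin 7) ℤ := classMatrix * classGram * classMatrix.transpose

theorem witness_isSymm : witness.IsSymm := by
  rw [witness, Matrix.IsSymm, Matrix.transpose_mul, Matrix.transpose_mul,
    Matrix.transpose_transpose, show classGram.transpose = classGram by decide, Matrix.mul_assoc]

theorem hasPattern_witness : atlas812.HasPattern witness := by
  intro i j
  fin_cases i <;> fin_cases j <;> decide

theorem rank_map_witness_le {R : Type*} [CommRing R] [StrongRankCondition R] (f : ℤ →+* R) :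
    (witness.map f).rank ≤ 3 := by
  rw [witness, Matrix.map_mul, Matrix.map_mul]
  exact (Matrix.rank_mul_le_left _ _).trans <| (Matrix.rank_mul_le_left _ _).trans <|
    (Matrix.rank_le_card_width _).trans_eq (Fintype.card_fin 3)

end atlas812

/-- Graph number 812 in the Atlas of Graphs has minimum rank 3 over the reals:
3 is the least element of the set of ranks of real symmetric 7×7 matrices whose
off-diagonal zero/nonzero pattern matches the edges of the graph. -/
theorem atlas812_minRank_eq_three :
    IsLeast {r : ℕ | ∃ A : Matrix (Fin 7) (Fin 7) ℝ, A.IsSymm ∧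
        (∀ i j : Fin 7, i ≠ j →
          (A i j ≠ 0 ↔
            ((i.val + 1, j.val + 1) ∈ atlas812Edges ∨
             (j.val + 1, i.val + 1) ∈ atlas812Edges))) ∧
        A.rank = r} 3 := by
  have hpattern : atlas812.HasPattern (atlas812.witness.map (Int.castRingHom ℝ)) :=
    atlas812.hasPattern_witness.map _ Int.cast_injective
  refine ⟨⟨_, atlas812.witness_isSymm.map _, (atlas812.hasPattern_iff _).mp hpattern, ?_⟩, ?_⟩
  · exact le_antisymm (atlas812.rank_map_witness_le _) (atlas812.three_le_rank hpattern)
  · rintro r ⟨A, -, hA, rfl⟩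
    exact atlas812.three_le_rank ((atlas812.hasPattern_iff A).mpr hA)
end

section
/- The simple graph G on vertex set {1,2,3,4,5,6,7} with edge set {{1,2},{1,3},{2,3},{2,6},{2,7},{3,4},{3,5},{3,7},{4,5},{4,6},{5,6}} (graph number 831 in the Atlas of Graphs) has minimum rank 3 over the real numbers. -/
/-!
The lower bound holds for every matrix with the pattern: rows `1, 3, 5` against columns
`2, 4, 6` form a lower-triangular `3 × 3` submatrix with nonzero diagonal, because
`12, 34, 56` are edges while `14, 16, 36` are not. The upper bound is an explicit matrix
with the pattern that factors through `ℝ³`.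
-/

/-- Edge list of graph number 831 in the Atlas of Graphs (vertices 1..7). -/
def atlas831Edges : List (ℕ × ℕ) := [(1,2),(1,3),(2,3),(2,6),(2,7),(3,4),(3,5),(3,7),(4,5),(4,6),(5,6)]

namespace Matrix

variable {m n ι K : Type*} [Field K] [Fintype ι] [LinearOrder ι]

theorem rank_eq_card_of_isLowerTriangular (M : Matrix ι ι K) (hM : M.IsLowerTriangular)
    (hd : ∀ i, M i i ≠ 0) : M.rank = Fintype.card ι := by
  classical
  rw [← M.mul_one, rank_mul_eq_right_of_isLowerTriangular M 1 hM hd, rank_one]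

theorem card_le_rank_of_isLowerTriangular_submatrix [Fintype n] (A : Matrix m n K)
    (r : ι → m) (c : ι → n) (hA : (A.submatrix r c).IsLowerTriangular)
    (hd : ∀ i, A (r i) (c i) ≠ 0) : Fintype.card ι ≤ A.rank :=
  rank_eq_card_of_isLowerTriangular _ hA hd ▸ rank_submatrix_le A r c

end Matrix

/-- Vertex `i : Fin 7` is vertex `i + 1` of the atlas. -/
abbrev Atlas831Pattern (A : Matrix (Fin 7) (Fin 7) ℝ) : Prop :=
  ∀ i j : Fin 7, i ≠ j →
    (A i j ≠ 0 ↔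
      ((i.val + 1, j.val + 1) ∈ atlas831Edges ∨ (j.val + 1, i.val + 1) ∈ atlas831Edges))

theorem three_le_rank_of_atlas831Pattern (A : Matrix (Fin 7) (Fin 7) ℝ)
    (hA : Atlas831Pattern A) : 3 ≤ A.rank := by
  have h_edge : ∀ i j, i ≠ j → (i.val + 1, j.val + 1) ∈ atlas831Edges → A i j ≠ 0 :=
    fun i j hij h => (hA i j hij).mpr (Or.inl h)
  have h_nonedge : ∀ i j, i ≠ j → (i.val + 1, j.val + 1) ∉ atlas831Edges →
      (j.val + 1, i.val + 1) ∉ atlas831Edges → A i j = 0 :=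
    fun i j hij h h' => not_not.mp fun hne => ((hA i j hij).mp hne).elim h h'
  simpa using A.card_le_rank_of_isLowerTriangular_submatrix ![0, 2, 4] ![1, 3, 5]
    (fun i j hij => by
      fin_cases i <;> fin_cases j <;> first
        | exact absurd hij (by decide)
        | exact h_nonedge _ _ (by decide) (by decide) (by decide))
    (fun i => by fin_cases i <;> exact h_edge _ _ (by decide) (by decide))

noncomputable def atlas831Witness : Matrix (Fin 7) (Fin 7) ℝ :=
  !![0, 1, 1, 0, 0, 0, 0;
     1, 1, 1, 0, 0, 1, 1;
     1, 1, 2, -1, -1, 0, 1;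
     0, 0, -1, 1, 1, 1, 0;
     0, 0, -1, 1, 1, 1, 0;
     0, 1, 0, 1, 1, 1, 0;
     0, 1, 1, 0, 0, 0, 0]

theorem atlas831Witness_eq_mul :
    atlas831Witness =
      !![(1 : ℝ), 0, -1; 1, 0, 0; 1, -1, 0; 0, 1, 0; 0, 1, 0; 1, 1, -1; 1, 0, -1] *
      !![(1 : ℝ), 1, 1, 0, 0, 1, 1; 0, 0, -1, 1, 1, 1, 0; 1, 0, 0, 0, 0, 1, 1] := by
  ext i j
  fin_cases i <;> fin_cases j <;> norm_num [atlas831Witness, Matrix.mul_apply, Fin.sum_univ_succ]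

theorem atlas831Witness_rank_le : atlas831Witness.rank ≤ 3 := by
  rw [atlas831Witness_eq_mul]
  exact (Matrix.rank_mul_le_left _ _).trans
    ((Matrix.rank_le_width _).trans_eq (Fintype.card_fin 3))

theorem atlas831Witness_isSymm : atlas831Witness.IsSymm := by
  ext i j
  fin_cases i <;> fin_cases j <;> simp [atlas831Witness]

theorem atlas831Pattern_atlas831Witness : Atlas831Pattern atlas831Witness := by
  intro i j hij
  fin_cases i <;> fin_cases j <;> simp_all [atlas831Witness, atlas831Edges]

/-- Graph number 831 in the Atlas of Graphs has minimum rank 3 over the reals: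
3 is the least element of the set of ranks of real symmetric 7×7 matrices whose
off-diagonal zero/nonzero pattern matches the edges of the graph. -/
theorem atlas831_minRank_eq_three :
    IsLeast {r : ℕ | ∃ A : Matrix (Fin 7) (Fin 7) ℝ, A.IsSymm ∧
        (∀ i j : Fin 7, i ≠ j →
          (A i j ≠ 0 ↔
            ((i.val + 1, j.val + 1) ∈ atlas831Edges ∨
             (j.val + 1, i.val + 1) ∈ atlas831Edges))) ∧
        A.rank = r} 3 := by
  refine
    ⟨⟨atlas831Witness, atlas831Witness_isSymm, atlas831Pattern_atlas831Witness, ?_⟩, ?_⟩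
  · exact atlas831Witness_rank_le.antisymm
      (three_le_rank_of_atlas831Pattern _ atlas831Pattern_atlas831Witness)
  · rintro r ⟨A, -, hA, rfl⟩
    exact three_le_rank_of_atlas831Pattern A hA
end

section
/- The simple graph G on vertex set {1,2,3,4,5,6,7} with edge set {{1,2},{1,3},{1,7},{2,3},{2,4},{2,6},{2,7},{3,5},{3,7},{4,5},{5,6}} (graph number 832 in the Atlas of Graphs) has minimum rank 3 over the real numbers. -/
/-! In any matrix with this pattern, the 3×3 submatrix on rows 4, 1, 5 and columns 2, 3, 6 is
lower triangular, with its diagonal on the edges {4,2}, {1,3}, {5,6}; so it is invertible and the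
rank is at least 3. Conversely, an explicit integer matrix with the pattern factors through ℤ³.
(Vertex v is the index v - 1 : Fin 7.) -/

/-- Edge list of graph number 832 in the Atlas of Graphs (vertices 1..7). -/
def atlas832Edges : List (ℕ × ℕ) := [(1,2),(1,3),(1,7),(2,3),(2,4),(2,6),(2,7),(3,5),(3,7),(4,5),(5,6)]

open Matrix

theorem Matrix.card_le_rank_of_det_submatrix_ne_zero {m n k R : Type*} [Fintype n] [Fintype k]
    [DecidableEq k] [CommRing R] [IsDomain R] (A : Matrix m n R) (r : k → m) (c : k → n)
    (h : (A.submatrix r c).det ≠ 0) : Fintype.card k ≤ A.rank :=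
  (rank_of_det_ne_zero h).symm.le.trans (rank_submatrix_le A r c)

abbrev atlas832Adj (i j : Fin 7) : Prop :=
  (i.val + 1, j.val + 1) ∈ atlas832Edges ∨ (j.val + 1, i.val + 1) ∈ atlas832Edges

def HasAtlas832Pattern {R : Type*} [Zero R] (A : Matrix (Fin 7) (Fin 7) R) : Prop :=
  ∀ i j : Fin 7, i ≠ j → (A i j ≠ 0 ↔ atlas832Adj i j)

namespace HasAtlas832Pattern

variable {R : Type*}

theorem apply_ne_zero [Zero R] {A : Matrix (Fin 7) (Fin 7) R} (hA : HasAtlas832Pattern A)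
    (i j : Fin 7) (hij : i ≠ j) (hadj : atlas832Adj i j) : A i j ≠ 0 :=
  (hA i j hij).2 hadj

theorem apply_eq_zero [Zero R] {A : Matrix (Fin 7) (Fin 7) R} (hA : HasAtlas832Pattern A)
    (i j : Fin 7) (hij : i ≠ j) (hadj : ¬ atlas832Adj i j) : A i j = 0 :=
  not_not.1 (mt (hA i j hij).1 hadj)

theorem map_intCast [AddGroupWithOne R] [CharZero R] {A : Matrix (Fin 7) (Fin 7) ℤ}
    (hA : HasAtlas832Pattern A) : HasAtlas832Pattern (A.map (Int.cast : ℤ → R)) :=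
  fun i j hij => by simpa only [map_apply, ne_eq, Int.cast_eq_zero] using hA i j hij

theorem three_le_rank [CommRing R] [IsDomain R] {A : Matrix (Fin 7) (Fin 7) R}
    (hA : HasAtlas832Pattern A) : 3 ≤ A.rank := by
  have hdet : (A.submatrix ![3, 0, 4] ![1, 2, 5]).det = A 3 1 * A 0 2 * A 4 5 := by
    rw [det_fin_three]
    simp only [submatrix_apply, cons_val_zero, cons_val_one, cons_val_two, head_cons, tail_cons,
      hA.apply_eq_zero 3 2 (by decide) (by decide),
      hA.apply_eq_zero 3 5 (by decide) (by decide),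
      hA.apply_eq_zero 0 5 (by decide) (by decide),
      hA.apply_eq_zero 4 1 (by decide) (by decide)]
    ring
  have hminor : (A.submatrix ![3, 0, 4] ![1, 2, 5]).det ≠ 0 := by
    rw [hdet]
    exact mul_ne_zero (mul_ne_zero (hA.apply_ne_zero 3 1 (by decide) (by decide))
      (hA.apply_ne_zero 0 2 (by decide) (by decide)))
      (hA.apply_ne_zero 4 5 (by decide) (by decide))
  simpa using A.card_le_rank_of_det_submatrix_ne_zero (k := Fin 3) _ _ hminor

end HasAtlas832Pattern

def atlas832WitnessLeft : Matrix (Fin 7) (Fin 3) ℤ :=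
  !![1, 0, 0; 1, 0, 1; 1, 2, 2; 0, 1, 1; 0, 1, 0; 0, 1, 1; 1, 0, 0]

def atlas832WitnessRight : Matrix (Fin 3) (Fin 7) ℤ :=
  !![1, 1, 1, 0, 0, 0, 1; 0, 0, 2, 1, 1, 1, 0; 0, -1, -2, -1, 0, -1, 0]

def atlas832WitnessInt : Matrix (Fin 7) (Fin 7) ℤ :=
  !![1, 1, 1, 0, 0, 0, 1;
     1, 0, -1, -1, 0, -1, 1;
     1, -1, 1, 0, 2, 0, 1;
     0, -1, 0, 0, 1, 0, 0;
     0, 0, 2, 1, 1, 1, 0;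
     0, -1, 0, 0, 1, 0, 0;
     1, 1, 1, 0, 0, 0, 1]

theorem atlas832WitnessInt_eq_mul :
    atlas832WitnessInt = atlas832WitnessLeft * atlas832WitnessRight := by
  decide

theorem atlas832WitnessInt_isSymm : atlas832WitnessInt.IsSymm := by
  decide

theorem hasAtlas832Pattern_atlas832WitnessInt : HasAtlas832Pattern atlas832WitnessInt := by
  intro i j
  fin_cases i <;> fin_cases j <;> decide

theorem rank_map_atlas832WitnessInt_le {R : Type*} [CommRing R] [StrongRankCondition R] :
    (atlas832WitnessInt.map (Int.cast : ℤ → R)).rank ≤ 3 := by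
  calc _ = (atlas832WitnessLeft.map (Int.castRingHom R) *
        atlas832WitnessRight.map (Int.castRingHom R)).rank := by
        rw [← Matrix.map_mul, ← atlas832WitnessInt_eq_mul]; rfl
    _ ≤ 3 := (rank_mul_le_left _ _).trans (rank_le_width _)

/-- Graph number 832 in the Atlas of Graphs has minimum rank 3 over the reals:
3 is the least element of the set of ranks of real symmetric 7×7 matrices whose
off-diagonal zero/nonzero pattern matches the edges of the graph. -/
theorem atlas832_minRank_eq_three :
    IsLeast {r : ℕ | ∃ A : Matrix (Fin 7) (Fin 7) ℝ, A.IsSymm ∧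
        (∀ i j : Fin 7, i ≠ j →
          (A i j ≠ 0 ↔
            ((i.val + 1, j.val + 1) ∈ atlas832Edges ∨
             (j.val + 1, i.val + 1) ∈ atlas832Edges))) ∧
        A.rank = r} 3 := by
  have hpattern : HasAtlas832Pattern (atlas832WitnessInt.map (Int.cast : ℤ → ℝ)) :=
    hasAtlas832Pattern_atlas832WitnessInt.map_intCast
  refine ⟨⟨_, atlas832WitnessInt_isSymm.map _, hpattern, ?_⟩, ?_⟩
  · exact le_antisymm rank_map_atlas832WitnessInt_le hpattern.three_le_rank
  · rintro r ⟨A, -, hA, rfl⟩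
    exact HasAtlas832Pattern.three_le_rank hA
end

section
/- The simple graph G on vertex set {1,2,3,4,5,6,7} with edge set {{1,2},{1,3},{1,4},{2,3},{2,4},{3,4},{3,5},{3,6},{3,7},{4,5},{4,6},{4,7}} (graph number 913 in the Atlas of Graphs) has minimum rank 3 over the real numbers. -/
/-!
Lower bound: in the rows of vertices 4, 1, 6 and the columns of vertices 5, 2, 3, the pattern forces
a triangular 3 × 3 block with nonzero diagonal (4 ~ 5, 1 ~ 2, 6 ~ 3, while 5 is adjacent to neither
1 nor 6 and 2 is not adjacent to 6), so every matrix with the pattern has rank at least 3.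

Upper bound: with u₁ = (0,1,1,1,1,2,3), u₂ = (1,1,1,2,0,0,0), u₃ = (0,1,0,0,1,2,3), the matrix
u₁u₁ᵀ + u₂u₂ᵀ - u₃u₃ᵀ has the pattern and rank 3. The sign is needed: in a Gram realization by
vectors of ℝ³, those of the vertices 5, 6, 7 would form an orthogonal basis to which the nonzero
vector of vertex 1 is orthogonal.
-/

/-- Edge list of graph number 913 in the Atlas of Graphs (vertices 1..7). -/
def atlas913Edges : List (ℕ × ℕ) := [(1,2),(1,3),(1,4),(2,3),(2,4),(3,4),(3,5),(3,6),(3,7),(4,5),(4,6),(4,7)]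

namespace Matrix

variable {m n k R : Type*}

theorem IsSymm.mul_mul_transpose [Fintype n] [CommSemiring R] {D : Matrix n n R} (hD : D.IsSymm)
    (B : Matrix m n R) : (B * D * Bᵀ).IsSymm := by
  simp only [IsSymm, transpose_mul, transpose_transpose, hD.eq, Matrix.mul_assoc]

theorem le_rank_of_isUpperTriangular_submatrix [Fintype n] [Fintype k] [LinearOrder k]
    [DecidableEq k] [CommRing R] [IsDomain R] (A : Matrix m n R) (r : k → m) (c : k → n)
    (htri : (A.submatrix r c).IsUpperTriangular) (hdiag : ∀ i, A (r i) (c i) ≠ 0) :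
    Fintype.card k ≤ A.rank := by
  have hdet : (A.submatrix r c).det ≠ 0 := by
    rw [det_of_isUpperTriangular htri]
    exact Finset.prod_ne_zero_iff.mpr fun i _ => hdiag i
  exact (rank_of_det_ne_zero hdet).symm.le.trans (rank_submatrix_le A r c)

def HasOffDiagPattern [Zero R] (A : Matrix n n R) (adj : n → n → Prop) : Prop :=
  ∀ i j, i ≠ j → (A i j ≠ 0 ↔ adj i j)

namespace HasOffDiagPattern

variable [Zero R] {A : Matrix n n R} {adj : n → n → Prop} {i j : n}

theorem apply_ne_zero (hA : A.HasOffDiagPattern adj) (hij : i ≠ j) (h : adj i j) : A i j ≠ 0 :=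
  (hA i j hij).mpr h

theorem apply_eq_zero (hA : A.HasOffDiagPattern adj) (hij : i ≠ j) (h : ¬adj i j) : A i j = 0 :=
  not_not.mp fun hne => h ((hA i j hij).mp hne)

end HasOffDiagPattern

end Matrix

open Matrix

def atlas913Adj (i j : Fin 7) : Prop :=
  (i.val + 1, j.val + 1) ∈ atlas913Edges ∨ (j.val + 1, i.val + 1) ∈ atlas913Edges

instance : DecidableRel atlas913Adj := fun _ _ => inferInstanceAs (Decidable (_ ∨ _))

theorem atlas913_three_le_rank {A : Matrix (Fin 7) (Fin 7) ℝ}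
    (hA : A.HasOffDiagPattern atlas913Adj) : 3 ≤ A.rank := by
  -- 0-based indices of the vertices 4, 1, 6 and 5, 2, 3
  have h := le_rank_of_isUpperTriangular_submatrix A ![3, 0, 5] ![4, 1, 2]
    (fun i j hji => by
      fin_cases i <;> fin_cases j <;>
        first
        | exact absurd hji (by decide)
        | exact hA.apply_eq_zero (by decide) (by decide))
    (fun i => by fin_cases i <;> exact hA.apply_ne_zero (by decide) (by decide))
  simpa using h

noncomputable def atlas913Witness : Matrix (Fin 7) (Fin 7) ℝ :=
  !![1, 1, 1, 2, 0, 0, 0;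
     1, 1, 2, 3, 0, 0, 0;
     1, 2, 2, 3, 1, 2, 3;
     2, 3, 3, 5, 1, 2, 3;
     0, 0, 1, 1, 0, 0, 0;
     0, 0, 2, 2, 0, 0, 0;
     0, 0, 3, 3, 0, 0, 0]

noncomputable def atlas913Factor : Matrix (Fin 7) (Fin 3) ℝ :=
  !![0, 1, 0; 1, 1, 1; 1, 1, 0; 1, 2, 0; 1, 0, 1; 2, 0, 2; 3, 0, 3]

theorem atlas913Witness_eq :
    atlas913Witness = atlas913Factor * diagonal ![(1 : ℝ), 1, -1] * atlas913Factorᵀ := by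
  ext i j
  simp only [mul_apply, transpose_apply, Fin.sum_univ_three]
  fin_cases i <;> fin_cases j <;> simp [atlas913Witness, atlas913Factor] <;> norm_num

theorem atlas913Witness_hasOffDiagPattern : atlas913Witness.HasOffDiagPattern atlas913Adj := by
  intro i j hij
  fin_cases i <;> fin_cases j <;> simp_all [atlas913Witness, atlas913Adj, atlas913Edges]

theorem atlas913Witness_isSymm : atlas913Witness.IsSymm := by
  rw [atlas913Witness_eq]
  exact (isSymm_diagonal _).mul_mul_transpose _

theorem atlas913Witness_rank : atlas913Witness.rank = 3 := by
  refine le_antisymm ?_ (atlas913_three_le_rank atlas913Witness_hasOffDiagPattern)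
  rw [atlas913Witness_eq]
  exact ((rank_mul_le_left _ _).trans (rank_mul_le_left _ _)).trans (rank_le_width _)

/-- Graph number 913 in the Atlas of Graphs has minimum rank 3 over the reals:
3 is the least element of the set of ranks of real symmetric 7×7 matrices whose
off-diagonal zero/nonzero pattern matches the edges of the graph. -/
theorem atlas913_minRank_eq_three :
    IsLeast {r : ℕ | ∃ A : Matrix (Fin 7) (Fin 7) ℝ, A.IsSymm ∧
        (∀ i j : Fin 7, i ≠ j →
          (A i j ≠ 0 ↔
            ((i.val + 1, j.val + 1) ∈ atlas913Edges ∨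
             (j.val + 1, i.val + 1) ∈ atlas913Edges))) ∧
        A.rank = r} 3 :=
  ⟨⟨atlas913Witness, atlas913Witness_isSymm, atlas913Witness_hasOffDiagPattern,
      atlas913Witness_rank⟩,
    fun _ ⟨_, _, hA, hr⟩ => hr ▸ atlas913_three_le_rank hA⟩
end

section
/- The simple graph G on vertex set {1,2,3,4,5,6,7} with edge set {{1,3},{1,4},{2,3},{2,4},{3,4},{3,5},{4,5},{4,6},{4,7},{5,6},{5,7},{6,7}} (graph number 924 in the Atlas of Graphs) has minimum rank 3 over the real numbers. -/
/-!
The path `1 - 3 - 5 - 6` is an induced subgraph of the graph, and in any matrix with the graph's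
pattern the rows `1, 3, 5` against the columns `3, 5, 6` form a triangular block with nonzero
diagonal, so the rank is at least `3`. Conversely `B D Bᵀ`, for an integer `7 × 3` matrix `B` and
`D = diag(1, 1, -1)`, has exactly the graph's pattern and rank at most `3`.
-/

/-- Edge list of graph number 924 in the Atlas of Graphs (vertices 1..7). -/
def atlas924Edges : List (ℕ × ℕ) := [(1,3),(1,4),(2,3),(2,4),(3,4),(3,5),(4,5),(4,6),(4,7),(5,6),(5,7),(6,7)]

open Matrix

namespace Matrix

variable {K m n o : Type*}

theorem card_le_rank_of_det_submatrix_ne_zero_s11 [Field K] [Fintype n] [Fintype o] [DecidableEq o]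
    (A : Matrix m n K) (r : o → m) (c : o → n) (h : (A.submatrix r c).det ≠ 0) :
    Fintype.card o ≤ A.rank :=
  calc Fintype.card o = (A.submatrix r c).rank :=
        ((A.submatrix r c).rank_of_isUnit ((isUnit_iff_isUnit_det _).mpr h.isUnit)).symm
    _ ≤ A.rank := rank_submatrix_le A r c

theorem three_le_rank_of_induced_path [Field K] [Fintype n] (A : Matrix n n K) {a b c d : n}
    (hab : A a b ≠ 0) (hbc : A b c ≠ 0) (hcd : A c d ≠ 0)
    (hac : A a c = 0) (had : A a d = 0) (hbd : A b d = 0) : 3 ≤ A.rank := by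
  have hdet : (A.submatrix ![a, b, c] ![b, c, d]).det ≠ 0 := by
    rw [det_fin_three]
    simpa [hac, had, hbd] using mul_ne_zero (mul_ne_zero hab hbc) hcd
  simpa using A.card_le_rank_of_det_submatrix_ne_zero_s11 _ _ hdet

theorem rank_mul_le_card_middle [CommSemiring K] [StrongRankCondition K] [Fintype n] [Fintype o]
    (B : Matrix m o K) (C : Matrix o n K) :
    (B * C).rank ≤ Fintype.card o :=
  (rank_mul_le_right B C).trans C.rank_le_card_height

end Matrix

def IsAtlas924Pattern {R : Type*} [Zero R] (A : Matrix (Fin 7) (Fin 7) R) : Prop :=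
  ∀ i j : Fin 7, i ≠ j →
    (A i j ≠ 0 ↔
      ((i.val + 1, j.val + 1) ∈ atlas924Edges ∨ (j.val + 1, i.val + 1) ∈ atlas924Edges))

theorem three_le_rank_of_isAtlas924Pattern {K : Type*} [Field K] {A : Matrix (Fin 7) (Fin 7) K}
    (hA : IsAtlas924Pattern A) : 3 ≤ A.rank := by
  have edge (i j : Fin 7) (hij : i ≠ j) (he : (i.val + 1, j.val + 1) ∈ atlas924Edges) :
      A i j ≠ 0 :=
    (hA i j hij).mpr (Or.inl he)
  have nonedge (i j : Fin 7) (hij : i ≠ j)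
      (hne : ¬((i.val + 1, j.val + 1) ∈ atlas924Edges ∨ (j.val + 1, i.val + 1) ∈ atlas924Edges)) :
      A i j = 0 :=
    not_not.mp (mt (hA i j hij).mp hne)
  exact A.three_le_rank_of_induced_path (a := 0) (b := 2) (c := 4) (d := 5)
    (edge _ _ (by decide) (by decide)) (edge _ _ (by decide) (by decide))
    (edge _ _ (by decide) (by decide)) (nonedge _ _ (by decide) (by decide))
    (nonedge _ _ (by decide) (by decide)) (nonedge _ _ (by decide) (by decide))

def atlas924Factor : Matrix (Fin 7) (Fin 3) ℤ :=
  !![1, 0, 1; 1, 0, 1; 1, -1, 0; 1, 3, 0; 1, 2, 1; 1, 1, 1; 2, 2, 2]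

def atlas924Witness : Matrix (Fin 7) (Fin 7) ℤ :=
  atlas924Factor * diagonal ![1, 1, -1] * atlas924Factorᵀ

theorem isSymm_atlas924Witness : atlas924Witness.IsSymm := by
  simp [atlas924Witness, IsSymm, transpose_mul, Matrix.mul_assoc]

theorem isAtlas924Pattern_atlas924Witness : IsAtlas924Pattern atlas924Witness := by
  intro i j
  fin_cases i <;> fin_cases j <;> decide

theorem isAtlas924Pattern_map_intCast {K : Type*} [AddGroupWithOne K] [CharZero K]
    {A : Matrix (Fin 7) (Fin 7) ℤ} (hA : IsAtlas924Pattern A) :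
    IsAtlas924Pattern (A.map (Int.cast : ℤ → K)) := by
  intro i j hij
  simpa only [map_apply, ne_eq, Int.cast_eq_zero] using hA i j hij

theorem rank_atlas924Witness_map_le {K : Type*} [CommRing K] [StrongRankCondition K] :
    (atlas924Witness.map (Int.cast : ℤ → K)).rank ≤ 3 := by
  rw [show (Int.cast : ℤ → K) = Int.castRingHom K from rfl, atlas924Witness, Matrix.mul_assoc,
    Matrix.map_mul]
  exact (rank_mul_le_card_middle _ _).trans_eq (Fintype.card_fin 3)

/-- Graph number 924 in the Atlas of Graphs has minimum rank 3 over the reals: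
3 is the least element of the set of ranks of real symmetric 7×7 matrices whose
off-diagonal zero/nonzero pattern matches the edges of the graph. -/
theorem atlas924_minRank_eq_three :
    IsLeast {r : ℕ | ∃ A : Matrix (Fin 7) (Fin 7) ℝ, A.IsSymm ∧
        (∀ i j : Fin 7, i ≠ j →
          (A i j ≠ 0 ↔
            ((i.val + 1, j.val + 1) ∈ atlas924Edges ∨
             (j.val + 1, i.val + 1) ∈ atlas924Edges))) ∧
        A.rank = r} 3 := by
  have hW : IsAtlas924Pattern (atlas924Witness.map (Int.cast : ℤ → ℝ)) :=
    isAtlas924Pattern_map_intCast isAtlas924Pattern_atlas924Witness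
  refine ⟨⟨_, isSymm_atlas924Witness.map _, hW, ?_⟩, ?_⟩
  · exact le_antisymm rank_atlas924Witness_map_le (three_le_rank_of_isAtlas924Pattern hW)
  · rintro r ⟨A, -, hA, rfl⟩
    exact three_le_rank_of_isAtlas924Pattern hA
end

section
/- The simple graph G on vertex set {1,2,3,4,5,6,7} with edge set {{1,2},{1,3},{2,3},{2,4},{2,5},{2,7},{3,4},{3,6},{3,7},{4,5},{4,6},{5,6}} (graph number 932 in the Atlas of Graphs) has minimum rank 3 over the real numbers. -/
/-- Edge list of graph number 932 in the Atlas of Graphs (vertices 1..7). -/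
def atlas932Edges : List (ℕ × ℕ) := [(1,2),(1,3),(2,3),(2,4),(2,5),(2,7),(3,4),(3,6),(3,7),(4,5),(4,6),(5,6)]

/-!
Vertices 1, 2, 5, 6 induce a path 1 – 2 – 5 – 6, so in any matrix with the graph's pattern the
rows 1, 2, 5 and columns 2, 5, 6 form a triangular 3 × 3 submatrix with nonzero diagonal, and the
rank is at least 3. Conversely, rank 3 is attained by the Gram matrix of seven vectors in ℝ³ for
the indefinite form x₀y₀ + x₁y₁ − x₂y₂, chosen so that exactly the non-adjacent pairs are
orthogonal.
-/

namespace Matrix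

variable {R : Type*} [CommRing R] [IsDomain R] {n : Type*} [Fintype n]

theorem three_le_rank_of_inducedPath (A : Matrix n n R) {a b c d : n}
    (hab : A a b ≠ 0) (hbc : A b c ≠ 0) (hcd : A c d ≠ 0)
    (hac : A a c = 0) (had : A a d = 0) (hbd : A b d = 0) : 3 ≤ A.rank := by
  have hdet : (A.submatrix ![a, b, c] ![b, c, d]).det = A a b * A b c * A c d := by
    rw [det_fin_three]
    simp [hac, had, hbd]
  have hrank : (A.submatrix ![a, b, c] ![b, c, d]).rank = 3 := by
    rw [rank_of_det_ne_zero (hdet ▸ mul_ne_zero (mul_ne_zero hab hbc) hcd), Fintype.card_fin]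
  exact hrank ▸ rank_submatrix_le A _ _

end Matrix

/-- `A` has the off-diagonal zero pattern of the graph on `1, …, n` with edge list `E`. -/
def HasEdgePattern {R : Type*} [Zero R] {n : ℕ} (E : List (ℕ × ℕ)) (A : Matrix (Fin n) (Fin n) R) :
    Prop :=
  ∀ i j : Fin n, i ≠ j → (A i j ≠ 0 ↔ ((i.val + 1, j.val + 1) ∈ E ∨ (j.val + 1, i.val + 1) ∈ E))

theorem three_le_rank_of_hasEdgePattern_atlas932 {A : Matrix (Fin 7) (Fin 7) ℝ}
    (hA : HasEdgePattern atlas932Edges A) : 3 ≤ A.rank := by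
  have edge (i j : Fin 7) (hij : i ≠ j) (h : (i.val + 1, j.val + 1) ∈ atlas932Edges) :
      A i j ≠ 0 :=
    (hA i j hij).mpr (Or.inl h)
  have nonEdge (i j : Fin 7) (hij : i ≠ j)
      (h : ¬((i.val + 1, j.val + 1) ∈ atlas932Edges ∨ (j.val + 1, i.val + 1) ∈ atlas932Edges)) :
      A i j = 0 :=
    not_not.mp (mt (hA i j hij).mp h)
  exact A.three_le_rank_of_inducedPath
    (edge 0 1 (by decide) (by decide)) (edge 1 4 (by decide) (by decide))
    (edge 4 5 (by decide) (by decide)) (nonEdge 0 4 (by decide) (by decide))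
    (nonEdge 0 5 (by decide) (by decide)) (nonEdge 1 5 (by decide) (by decide))

def atlas932Vectors : Matrix (Fin 7) (Fin 3) ℝ :=
  !![1, 0, 1; 1, 1, 4; 1, 1, 3; 1, 1, 1; 1, 2, 1; 1, 3, 1; 1, 0, 1]

def atlas932Witness : Matrix (Fin 7) (Fin 7) ℝ :=
  !![ 0,  -3,  -2,  0,  0, 0,  0;
     -3, -14, -10, -2, -1, 0, -3;
     -2, -10,  -7, -1,  0, 1, -2;
      0,  -2,  -1,  1,  2, 3,  0;
      0,  -1,   0,  2,  4, 6,  0;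
      0,   0,   1,  3,  6, 9,  0;
      0,  -3,  -2,  0,  0, 0,  0]

theorem atlas932Witness_eq_gram :
    atlas932Witness =
      atlas932Vectors * Matrix.diagonal ![(1 : ℝ), 1, -1] * atlas932Vectors.transpose := by
  ext i j
  fin_cases i <;> fin_cases j <;>
    simp [atlas932Witness, atlas932Vectors, Matrix.mul_apply, Matrix.vecMul_diagonal,
      Fin.sum_univ_three] <;> norm_num

theorem atlas932Witness_isSymm : atlas932Witness.IsSymm := by
  rw [atlas932Witness_eq_gram, Matrix.IsSymm]
  simp [Matrix.transpose_mul, Matrix.mul_assoc]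

theorem atlas932Witness_rank_le : atlas932Witness.rank ≤ 3 := by
  rw [atlas932Witness_eq_gram]
  exact (Matrix.rank_mul_le_left _ _).trans (Matrix.rank_le_width _)

theorem atlas932Witness_hasEdgePattern : HasEdgePattern atlas932Edges atlas932Witness := by
  intro i j hij
  fin_cases i <;> fin_cases j <;>
    first
      | exact absurd rfl hij
      | norm_num [atlas932Witness, atlas932Edges]

/-- Graph number 932 in the Atlas of Graphs has minimum rank 3 over the reals:
3 is the least element of the set of ranks of real symmetric 7×7 matrices whose
off-diagonal zero/nonzero pattern matches the edges of the graph. -/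
theorem atlas932_minRank_eq_three :
    IsLeast {r : ℕ | ∃ A : Matrix (Fin 7) (Fin 7) ℝ, A.IsSymm ∧
        (∀ i j : Fin 7, i ≠ j →
          (A i j ≠ 0 ↔
            ((i.val + 1, j.val + 1) ∈ atlas932Edges ∨
             (j.val + 1, i.val + 1) ∈ atlas932Edges))) ∧
        A.rank = r} 3 := by
  refine ⟨⟨atlas932Witness, atlas932Witness_isSymm, atlas932Witness_hasEdgePattern,
    atlas932Witness_rank_le.antisymm ?_⟩, ?_⟩
  · exact three_le_rank_of_hasEdgePattern_atlas932 atlas932Witness_hasEdgePattern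
  · rintro r ⟨A, -, hA, rfl⟩
    exact three_le_rank_of_hasEdgePattern_atlas932 hA
end

section
/- The simple graph G on vertex set {1,2,3,4,5,6,7} with edge set {{1,2},{1,4},{2,3},{2,5},{2,6},{2,7},{3,4},{3,5},{4,5},{5,6},{5,7},{6,7}} (graph number 953 in the Atlas of Graphs) has minimum rank 3 over the real numbers. -/
/-!
The edges {2,1}, {5,6}, {3,4} together with the non-edges {5,1}, {3,1}, {3,6} make the 3 × 3
submatrix on rows 2, 5, 3 and columns 1, 6, 4 triangular with nonzero diagonal, for every matrix
with the zero pattern of the graph; so its rank is at least 3, over any field. Conversely, seven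
vectors in ℝ³ that are orthogonal exactly along the non-edges have a Gram matrix with this pattern,
and that Gram matrix has rank at most 3.
-/

/-- Edge list of graph number 953 in the Atlas of Graphs (vertices 1..7). -/
def atlas953Edges : List (ℕ × ℕ) := [(1,2),(1,4),(2,3),(2,5),(2,6),(2,7),(3,4),(3,5),(4,5),(5,6),(5,7),(6,7)]

open Matrix

theorem Matrix.le_rank_of_isUpperTriangular_submatrix_s14 {m n K : Type*} [Fintype n] [Field K]
    {k : ℕ} (A : Matrix m n K) (r : Fin k → m) (c : Fin k → n)
    (htri : (A.submatrix r c).IsUpperTriangular) (hdiag : ∀ i, A (r i) (c i) ≠ 0) :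
    k ≤ A.rank := by
  have hdet : (A.submatrix r c).det ≠ 0 := by
    simpa [det_of_isUpperTriangular htri, Finset.prod_ne_zero_iff] using hdiag
  calc k = (A.submatrix r c).rank := by
        rw [rank_of_isUnit _ ((isUnit_iff_isUnit_det _).2 hdet.isUnit), Fintype.card_fin]
    _ ≤ A.rank := rank_submatrix_le A r c

def IsAtlas953Pattern {R : Type*} [Zero R] (A : Matrix (Fin 7) (Fin 7) R) : Prop :=
  ∀ i j : Fin 7, i ≠ j →
    (A i j ≠ 0 ↔ ((i.val + 1, j.val + 1) ∈ atlas953Edges ∨ (j.val + 1, i.val + 1) ∈ atlas953Edges))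

namespace IsAtlas953Pattern

variable {K : Type*} [Field K] {A : Matrix (Fin 7) (Fin 7) K}

theorem apply_eq_zero (hA : IsAtlas953Pattern A) {i j : Fin 7} (hij : i ≠ j)
    (hnonadj : ¬((i.val + 1, j.val + 1) ∈ atlas953Edges ∨ (j.val + 1, i.val + 1) ∈ atlas953Edges)) :
    A i j = 0 :=
  not_not.1 (mt (hA i j hij).1 hnonadj)

theorem three_le_rank (hA : IsAtlas953Pattern A) : 3 ≤ A.rank := by
  refine A.le_rank_of_isUpperTriangular_submatrix_s14 ![1, 4, 2] ![0, 5, 3] ?_ ?_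
  · intro i j hji
    fin_cases i <;> fin_cases j <;> (try exact absurd hji (by decide)) <;>
      exact hA.apply_eq_zero (by decide) (by decide)
  · intro i
    fin_cases i <;> exact (hA _ _ (by decide)).2 (by decide)

end IsAtlas953Pattern

def atlas953Vectors : Matrix (Fin 3) (Fin 7) ℝ :=
  !![1, 1, 0, 1, 0, 0, 0; 0, -1, 1, 1, 1, 0, 0; 0, 2, 0, 0, 1, 1, 2]

theorem isAtlas953Pattern_gram : IsAtlas953Pattern (atlas953Vectorsᵀ * atlas953Vectors) := by
  intro i j hij
  fin_cases i <;> fin_cases j <;>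
    simp_all [atlas953Vectors, mul_apply, Fin.sum_univ_three, atlas953Edges] <;> norm_num

theorem rank_gram_atlas953Vectors : (atlas953Vectorsᵀ * atlas953Vectors).rank = 3 :=
  le_antisymm ((rank_transpose_mul_self _).trans_le atlas953Vectors.rank_le_height)
    isAtlas953Pattern_gram.three_le_rank

/-- Graph number 953 in the Atlas of Graphs has minimum rank 3 over the reals:
3 is the least element of the set of ranks of real symmetric 7×7 matrices whose
off-diagonal zero/nonzero pattern matches the edges of the graph. -/
theorem atlas953_minRank_eq_three :
    IsLeast {r : ℕ | ∃ A : Matrix (Fin 7) (Fin 7) ℝ, A.IsSymm ∧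
        (∀ i j : Fin 7, i ≠ j →
          (A i j ≠ 0 ↔
            ((i.val + 1, j.val + 1) ∈ atlas953Edges ∨
             (j.val + 1, i.val + 1) ∈ atlas953Edges))) ∧
        A.rank = r} 3 := by
  constructor
  · exact ⟨_, transpose_mul _ _, isAtlas953Pattern_gram, rank_gram_atlas953Vectors⟩
  · rintro r ⟨A, -, hA, rfl⟩
    exact IsAtlas953Pattern.three_le_rank hA
end

section
/- The simple graph G on vertex set {1,2,3,4,5,6,7} with edge set {{1,2},{1,3},{1,4},{1,5},{1,6},{2,3},{2,7},{3,7},{4,7},{5,6},{5,7},{6,7}} (graph number 958 in the Atlas of Graphs) has minimum rank 3 over the real numbers. -/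
/-!
A rank-3 realisation is the Gram matrix of seven vectors in `ℝ³` that are orthogonal exactly
on the non-edges. Conversely, the submatrix on rows `1, 2, 5` and columns `4, 3, 6` is
upper triangular with nonzero diagonal (entries `{1,4}, {2,3}, {5,6}` are edges,
`{2,4}, {5,4}, {5,3}` are not), so every realisation has rank at least 3.
Vertex `k` is the index `k - 1 : Fin 7`.
-/

/-- Edge list of graph number 958 in the Atlas of Graphs (vertices 1..7). -/
def atlas958Edges : List (ℕ × ℕ) := [(1,2),(1,3),(1,4),(1,5),(1,6),(2,3),(2,7),(3,7),(4,7),(5,6),(5,7),(6,7)]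

open Matrix

theorem Matrix.card_le_rank_of_isUpperTriangular_submatrix_s16 {K m n ι : Type*} [Field K]
    [Fintype n] [Fintype ι] [LinearOrder ι] (A : Matrix m n K) (r : ι → m) (c : ι → n)
    (hA : (A.submatrix r c).IsUpperTriangular) (hd : ∀ i, A (r i) (c i) ≠ 0) :
    Fintype.card ι ≤ A.rank := by
  have hdet : (A.submatrix r c).det ≠ 0 := by
    simpa [det_of_isUpperTriangular hA, Finset.prod_ne_zero_iff] using hd
  calc Fintype.card ι = (A.submatrix r c).rank :=
        (rank_of_isUnit _ ((isUnit_iff_isUnit_det _).mpr hdet.isUnit)).symm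
    _ ≤ A.rank := rank_submatrix_le A r c

def HasAtlas958Pattern (A : Matrix (Fin 7) (Fin 7) ℝ) : Prop :=
  ∀ i j : Fin 7, i ≠ j →
    (A i j ≠ 0 ↔ ((i.val + 1, j.val + 1) ∈ atlas958Edges ∨ (j.val + 1, i.val + 1) ∈ atlas958Edges))

theorem three_le_rank_of_hasAtlas958Pattern {A : Matrix (Fin 7) (Fin 7) ℝ}
    (hA : HasAtlas958Pattern A) : 3 ≤ A.rank := by
  have hzero : ∀ i j : Fin 7, i ≠ j → ¬((i.val + 1, j.val + 1) ∈ atlas958Edges ∨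
      (j.val + 1, i.val + 1) ∈ atlas958Edges) → A i j = 0 :=
    fun i j hij hnot => not_not.mp (mt (hA i j hij).mp hnot)
  simpa using A.card_le_rank_of_isUpperTriangular_submatrix_s16 ![0, 1, 4] ![3, 2, 5]
    (fun i j hji => by
      fin_cases i <;> fin_cases j <;>
        first
        | exact absurd hji (by decide)
        | exact hzero _ _ (by decide) (by decide))
    (fun i => by fin_cases i <;> exact (hA _ _ (by decide)).mpr (by decide))

def atlas958GramFactor : Matrix (Fin 3) (Fin 7) ℝ :=
  !![1, 1, 1, 0, 0, 0, 1;
     1, 0, 0, 0, 1, 1, 1;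
     -2, 0, 0, 1, 0, 0, 1]

theorem hasAtlas958Pattern_gram :
    HasAtlas958Pattern (atlas958GramFactorᵀ * atlas958GramFactor) := by
  intro i j hij
  fin_cases i <;> fin_cases j <;>
    first
    | exact absurd rfl hij
    | simp [atlas958GramFactor, mul_apply, Fin.sum_univ_three, atlas958Edges] <;> norm_num

/-- Graph number 958 in the Atlas of Graphs has minimum rank 3 over the reals:
3 is the least element of the set of ranks of real symmetric 7×7 matrices whose
off-diagonal zero/nonzero pattern matches the edges of the graph. -/
theorem atlas958_minRank_eq_three :
    IsLeast {r : ℕ | ∃ A : Matrix (Fin 7) (Fin 7) ℝ, A.IsSymm ∧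
        (∀ i j : Fin 7, i ≠ j →
          (A i j ≠ 0 ↔
            ((i.val + 1, j.val + 1) ∈ atlas958Edges ∨
             (j.val + 1, i.val + 1) ∈ atlas958Edges))) ∧
        A.rank = r} 3 := by
  constructor
  · have hupper : (atlas958GramFactorᵀ * atlas958GramFactor).rank ≤ 3 :=
      (rank_mul_le_right _ _).trans (by simpa using rank_le_card_height atlas958GramFactor)
    exact ⟨atlas958GramFactorᵀ * atlas958GramFactor, by
      rw [IsSymm, transpose_mul, transpose_transpose],
      hasAtlas958Pattern_gram,
      le_antisymm hupper (three_le_rank_of_hasAtlas958Pattern hasAtlas958Pattern_gram)⟩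
  · rintro r ⟨A, -, hA, rfl⟩
    exact three_le_rank_of_hasAtlas958Pattern hA
end
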